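/- arXiv:2109.09387 — 4 statements merged into one kernel-verified Lean document; each statement's English description precedes it below -/
import Mathlib

section
/- Let L be a self-adjoint operator on a Hilbert space generating an analytic semigroup (e^{tL}) with ‖e^{tL}‖ ≤ M e^{-μt} for all t ≥ 0 (M ≥ 1, μ > 0). Then for any α ∈ [0,1) and any ε > 0 and any continuous function f : [0,T] → X, the function t ↦ ∫₀ᵗ e^{(t-s)L/ε²} f(s) ds satisfies the α-Hölder bound ‖t ↦ ∫₀ᵗ e^{(t-s)L/ε²} f(s) ds‖_{C^α([0,T];X)} ≤ C ε^{2-2α} ‖f‖_{C⁰([0,T];X)} for a constant C independent of ε and f. -/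
open MeasureTheory Set
open scoped RealInnerProductSpace

/-- The `C⁰` (sup) norm of `g` on `[0,T]`. -/
noncomputable def supNorm {X : Type*} [NormedAddCommGroup X] (T : ℝ) (g : ℝ → X) : ℝ :=
  ⨆ t : Icc (0:ℝ) T, ‖g (t : ℝ)‖

/-- The `α`-Hölder seminorm of `g` on `[0,T]`. -/
noncomputable def holderSemi {X : Type*} [NormedAddCommGroup X] (α T : ℝ) (g : ℝ → X) : ℝ :=
  ⨆ p : Icc (0:ℝ) T × Icc (0:ℝ) T,
    if (p.1 : ℝ) = (p.2 : ℝ) then 0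
    else ‖g (p.1 : ℝ) - g (p.2 : ℝ)‖ / |(p.1 : ℝ) - (p.2 : ℝ)| ^ α

/-- The `α`-Hölder norm of `g` on `[0,T]`: sup norm plus Hölder seminorm. -/
noncomputable def holderNorm {X : Type*} [NormedAddCommGroup X] (α T : ℝ) (g : ℝ → X) : ℝ :=
  supNorm T g + holderSemi α T g

/-!
Self-adjointness gives `‖S t‖ ^ 2 = ‖S (2 t)‖`, which upgrades the bound `M e^{-μt}` to `e^{-μt}`,
and makes `ψ t = ⟪S t x, x⟫ = ‖S (t / 2) x‖ ^ 2` midpoint convex; a midpoint convex function with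
values in `[0, ‖x‖ ^ 2]` drops by at most `δ / u * ‖x‖ ^ 2` on `[u, u + δ]`, whence the smoothing
estimate `‖S u - S (u + δ)‖ ≤ δ / u`. Interpolating it with the trivial bound `2` and factoring out
`S (u / 2)` gives `‖S u - S (u + δ)‖ ≤ 2 (δ / u) ^ α e^{-μu/2}`.

The rescaled family `t ↦ S (t / ε²)` is again such a semigroup, with rate `μ / ε²`. For the
Duhamel integral `g t = ∫₀ᵗ S (t - s) f s ds` of a semigroup with rate `λ`, the difference
`g t - g t'` splits into `∫_{t'}^{t} S (t - s) f s ds`, of size `‖f‖ min (t - t', 1 / λ)`, and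
`∫₀^{t'} (S (t - s) - S (t' - s)) f s ds`, of size `‖f‖ (t - t') ^ α ∫₀^∞ v ^ (-α) e^{-λv/2} dv`.
Both are `O(λ ^ (α - 1) (t - t') ^ α)`, and `λ ^ (α - 1) = μ ^ (α - 1) ε ^ (2 - 2α)`.
-/

lemma min_le_rpow_mul_rpow {x y θ : ℝ} (hx : 0 ≤ x) (hy : 0 ≤ y) (h0 : 0 ≤ θ) (h1 : θ ≤ 1) :
    min x y ≤ x ^ θ * y ^ (1 - θ) := by
  rcases (le_min hx hy).eq_or_lt with h | h
  · rw [← h]; positivity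
  · calc min x y = min x y ^ θ * min x y ^ (1 - θ) := by rw [← Real.rpow_add h]; simp
      _ ≤ x ^ θ * y ^ (1 - θ) := by
          gcongr
          · exact min_le_left _ _
          · exact min_le_right _ _

/-- The decrements `ψ (u - k δ) - ψ (u - k δ + δ)`, `k ≤ ⌊u / δ⌋`, are all at least
`ψ u - ψ (u + δ)`, and they telescope to at most `K`. -/
lemma sub_le_div_mul_of_midpoint_convex {ψ : ℝ → ℝ} {δ u K : ℝ} (hδ : 0 < δ) (hu : 0 < u)
    (hconv : ∀ a, 0 ≤ a → 2 * ψ (a + δ) ≤ ψ a + ψ (a + δ + δ))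
    (hnonneg : ∀ a, 0 ≤ a → 0 ≤ ψ a) (hle : ∀ a, 0 ≤ a → ψ a ≤ K) :
    ψ u - ψ (u + δ) ≤ δ / u * K := by
  set D : ℝ → ℝ := fun a => ψ a - ψ (a + δ)
  set n := ⌊u / δ⌋₊
  have hnδ : n * δ ≤ u := (le_div_iff₀ hδ).mp (Nat.floor_le (div_pos hu hδ).le)
  have hun : u < (n + 1) * δ := (div_lt_iff₀ hδ).mp (Nat.lt_floor_add_one _)
  have hD : ∀ k ≤ n, D u ≤ D (u - k * δ) := by
    intro k
    induction k with
    | zero => simp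
    | succ k ih =>
      intro hk
      have hk' : ((k + 1 : ℕ) : ℝ) * δ ≤ n * δ := by gcongr
      have := hconv (u - (k + 1 : ℕ) * δ) (by linarith)
      have e : u - ((k + 1 : ℕ) : ℝ) * δ + δ = u - k * δ := by push_cast; ring
      simp only [D, e] at this ih ⊢
      linarith [ih (by omega)]
  have htelescope : ∑ k ∈ Finset.range (n + 1), D (u - k * δ) = ψ (u - n * δ) - ψ (u + δ) := by
    have := Finset.sum_range_sub (fun k : ℕ => ψ (u + δ - k * δ)) (n + 1)
    push_cast at this
    convert this using 2 with k
    · simp only [D]; ring_nf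
    all_goals ring_nf
  have hsum : (n + 1) * D u ≤ K := by
    calc (n + 1) * D u = ∑ k ∈ Finset.range (n + 1), D u := by simp
      _ ≤ ∑ k ∈ Finset.range (n + 1), D (u - k * δ) :=
          Finset.sum_le_sum fun k hk => hD k (Nat.lt_succ_iff.mp (Finset.mem_range.mp hk))
      _ ≤ K := by
          rw [htelescope]
          linarith [hle _ (sub_nonneg.mpr hnδ), hnonneg (u + δ) (by linarith)]
  have hK : 0 ≤ K := (hnonneg u hu.le).trans (hle u hu.le)
  rw [div_mul_eq_mul_div, le_div_iff₀ hu]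
  rcases le_total (D u) 0 with h | h
  · nlinarith
  · calc D u * u ≤ D u * ((n + 1) * δ) := by gcongr
      _ ≤ δ * K := by linarith [mul_le_mul_of_nonneg_right hsum hδ.le]

lemma integrableOn_rpow_mul_exp_neg_mul {β c : ℝ} (hβ : β < 1) (hc : 0 < c) :
    IntegrableOn (fun v : ℝ => v ^ (-β) * Real.exp (-(c * v))) (Ioi 0) := by
  refine (integrableOn_rpow_mul_exp_neg_mul_rpow (s := -β) (by linarith) one_pos hc).congr_fun
    (fun v _ => ?_) measurableSet_Ioi
  simp only [Real.rpow_one, neg_mul]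

lemma intervalIntegrable_sub_rpow_mul_exp {β c a b : ℝ} (hβ : β < 1) (hc : 0 < c) (hab : a ≤ b) :
    IntervalIntegrable (fun s => (b - s) ^ (-β) * Real.exp (-(c * (b - s)))) volume a b := by
  have h : IntervalIntegrable (fun v : ℝ => v ^ (-β) * Real.exp (-(c * v))) volume 0 (b - a) := by
    rw [intervalIntegrable_iff_integrableOn_Ioc_of_le (by linarith)]
    exact (integrableOn_rpow_mul_exp_neg_mul hβ hc).mono_set Ioc_subset_Ioi_self
  simpa only [sub_zero, sub_sub_cancel] using (h.comp_sub_left b).symm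

lemma integral_sub_rpow_mul_exp_le {β c a b : ℝ} (hβ : β < 1) (hc : 0 < c) (hab : a ≤ b) :
    ∫ s in a..b, (b - s) ^ (-β) * Real.exp (-(c * (b - s)))
      ≤ c⁻¹ ^ (1 - β) * Real.Gamma (1 - β) := by
  rw [intervalIntegral.integral_comp_sub_left (fun v => v ^ (-β) * Real.exp (-(c * v))) b,
    sub_self, intervalIntegral.integral_of_le (by linarith),
    ← one_div, ← Real.integral_rpow_mul_exp_neg_mul_Ioi (by linarith) hc]
  simp only [show 1 - β - 1 = -β by ring]
  refine setIntegral_mono_set (integrableOn_rpow_mul_exp_neg_mul hβ hc) ?_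
    Ioc_subset_Ioi_self.eventuallyLE
  filter_upwards [ae_restrict_mem measurableSet_Ioi] with v (hv : 0 < v)
  positivity

lemma integral_exp_neg_mul_sub_le {c a b : ℝ} (hc : 0 < c) (hab : a ≤ b) :
    ∫ s in a..b, Real.exp (-c * (b - s)) ≤ c⁻¹ := by
  simpa using integral_sub_rpow_mul_exp_le (β := 0) one_pos hc hab

section HolderNorm

variable {X : Type*} [NormedAddCommGroup X] {T α K : ℝ} {g : ℝ → X}

lemma supNorm_nonneg (T : ℝ) (g : ℝ → X) : 0 ≤ supNorm T g :=
  Real.iSup_nonneg fun _ => norm_nonneg _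

lemma norm_le_supNorm (hg : ContinuousOn g (Icc 0 T)) {s : ℝ} (hs : s ∈ Icc 0 T) :
    ‖g s‖ ≤ supNorm T g := by
  refine le_ciSup (f := fun t : Icc (0 : ℝ) T => ‖g t‖) ?_ ⟨s, hs⟩
  refine (isCompact_Icc.bddAbove_image hg.norm).mono ?_
  rintro _ ⟨t, rfl⟩
  exact ⟨t, t.2, rfl⟩

lemma supNorm_le (hK : 0 ≤ K) (h : ∀ t ∈ Icc 0 T, ‖g t‖ ≤ K) : supNorm T g ≤ K :=
  Real.iSup_le (fun t => h t t.2) hK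

lemma holderSemi_le (hK : 0 ≤ K)
    (h : ∀ s ∈ Icc 0 T, ∀ t ∈ Icc 0 T, s < t → ‖g t - g s‖ ≤ K * (t - s) ^ α) :
    holderSemi α T g ≤ K := by
  have hlt : ∀ s ∈ Icc 0 T, ∀ t ∈ Icc 0 T, s < t → ‖g t - g s‖ / |t - s| ^ α ≤ K := by
    intro s hs t ht hst
    rw [abs_of_pos (sub_pos.2 hst)]
    exact div_le_of_le_mul₀ (by positivity) hK (h s hs t ht hst)
  refine Real.iSup_le (fun ⟨⟨s, hs⟩, ⟨t, ht⟩⟩ => ?_) hK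
  dsimp only
  split_ifs with hst
  · exact hK
  rcases lt_or_gt_of_ne hst with hst | hst
  · rw [norm_sub_rev, abs_sub_comm]; exact hlt s hs t ht hst
  · exact hlt t ht s hs hst

end HolderNorm

lemma norm_le_one_of_norm_le_exp {X : Type*} [NormedAddCommGroup X] [NormedSpace ℝ X]
    {S : ℝ → X →L[ℝ] X} {μ : ℝ}
    (hμ : 0 ≤ μ) (hdecay : ∀ t : ℝ, 0 ≤ t → ‖S t‖ ≤ Real.exp (-μ * t)) {t : ℝ} (ht : 0 ≤ t) :
    ‖S t‖ ≤ 1 :=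
  (hdecay t ht).trans (Real.exp_le_one_iff.mpr (by nlinarith))

lemma norm_integral_apply_sub_le {X : Type*} [NormedAddCommGroup X] [NormedSpace ℝ X]
    {S : ℝ → X →L[ℝ] X} {μ α N a b : ℝ} {f : ℝ → X} (hμ : 0 < μ)
    (hdecay : ∀ t : ℝ, 0 ≤ t → ‖S t‖ ≤ Real.exp (-μ * t)) (hα0 : 0 ≤ α) (hα1 : α ≤ 1)
    (hab : a ≤ b) (hf : ∀ s ∈ Icc a b, ‖f s‖ ≤ N) :
    ‖∫ s in a..b, S (b - s) (f s)‖ ≤ N * (b - a) ^ α * μ⁻¹ ^ (1 - α) := by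
  have hN : 0 ≤ N := (norm_nonneg _).trans (hf a ⟨le_rfl, hab⟩)
  have hpt : ∀ s ∈ Ioc a b, ‖S (b - s) (f s)‖ ≤ N * Real.exp (-μ * (b - s)) := fun s hs =>
    ((S _).le_of_opNorm_le_of_le (hdecay _ (sub_nonneg.2 hs.2))
      (hf s (Ioc_subset_Icc_self hs))).trans_eq (mul_comm _ _)
  have hshort : ‖∫ s in a..b, S (b - s) (f s)‖ ≤ N * (b - a) := by
    have h := intervalIntegral.norm_integral_le_of_norm_le_const (C := N) fun s hs => by
      rw [uIoc_of_le hab] at hs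
      refine (hpt s hs).trans (mul_le_of_le_one_right hN (Real.exp_le_one_iff.mpr ?_))
      nlinarith [hs.2]
    rwa [abs_of_nonneg (sub_nonneg.2 hab)] at h
  have hlong : ‖∫ s in a..b, S (b - s) (f s)‖ ≤ N * μ⁻¹ := by
    refine (intervalIntegral.norm_integral_le_of_norm_le hab (ae_of_all _ hpt)
      (Continuous.intervalIntegrable (by fun_prop) _ _)).trans ?_
    rw [intervalIntegral.integral_const_mul]
    gcongr
    exact integral_exp_neg_mul_sub_le hμ hab
  calc ‖∫ s in a..b, S (b - s) (f s)‖ ≤ N * min (b - a) μ⁻¹ := by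
        rw [mul_min_of_nonneg _ _ hN]; exact le_min hshort hlong
    _ ≤ N * ((b - a) ^ α * μ⁻¹ ^ (1 - α)) := by
        gcongr
        exact min_le_rpow_mul_rpow (sub_nonneg.2 hab) (inv_nonneg.2 hμ.le) hα0 hα1
    _ = N * (b - a) ^ α * μ⁻¹ ^ (1 - α) := by ring

structure IsSelfAdjointSemigroup {X : Type*} [NormedAddCommGroup X] [InnerProductSpace ℝ X]
    (S : ℝ → X →L[ℝ] X) : Prop where
  map_add : ∀ s t : ℝ, 0 ≤ s → 0 ≤ t → S (s + t) = (S s).comp (S t)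
  isSymmetric : ∀ t : ℝ, 0 ≤ t → (S t : X →ₗ[ℝ] X).IsSymmetric

namespace IsSelfAdjointSemigroup

variable {X : Type*} [NormedAddCommGroup X] [InnerProductSpace ℝ X] {S : ℝ → X →L[ℝ] X}
  {μ α T : ℝ} {f : ℝ → X}

lemma comp_div (hS : IsSelfAdjointSemigroup S) {c : ℝ} (hc : 0 ≤ c) :
    IsSelfAdjointSemigroup fun t => S (t / c) where
  map_add s t hs ht := by
    rw [add_div]; exact hS.map_add _ _ (div_nonneg hs hc) (div_nonneg ht hc)
  isSymmetric t ht := hS.isSymmetric _ (div_nonneg ht hc)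

lemma apply_add (hS : IsSelfAdjointSemigroup S) {s t : ℝ} (hs : 0 ≤ s) (ht : 0 ≤ t) (x : X) :
    S (s + t) x = S s (S t x) := by
  rw [hS.map_add s t hs ht]; rfl

lemma norm_sq [CompleteSpace X] (hS : IsSelfAdjointSemigroup S) {t : ℝ} (ht : 0 ≤ t) :
    ‖S t‖ ^ 2 = ‖S (t + t)‖ := by
  rw [hS.map_add t t ht ht, ← ((hS.isSymmetric t ht).isSelfAdjoint).norm_mul_self]; rfl

/-- `a t = ‖S t‖ e^{μt}` satisfies `a t ^ 2 = a (t + t)`, so `a t ^ 2 ^ n ≤ M` for every `n`,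
which forces `a t ≤ 1`. -/
lemma norm_le_exp [CompleteSpace X] (hS : IsSelfAdjointSemigroup S) {M : ℝ}
    (hbound : ∀ t : ℝ, 0 ≤ t → ‖S t‖ ≤ M * Real.exp (-μ * t)) {t : ℝ} (ht : 0 ≤ t) :
    ‖S t‖ ≤ Real.exp (-μ * t) := by
  have hpow : ∀ n : ℕ, ∀ t : ℝ, 0 ≤ t → (‖S t‖ * Real.exp (μ * t)) ^ 2 ^ n ≤ M := by
    intro n
    induction n with
    | zero =>
      intro t ht
      simpa [← le_div_iff₀ (Real.exp_pos _), div_eq_mul_inv, ← Real.exp_neg] using hbound t ht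
    | succ n ih =>
      intro t ht
      have hsq : (‖S t‖ * Real.exp (μ * t)) ^ 2 = ‖S (t + t)‖ * Real.exp (μ * (t + t)) := by
        rw [mul_pow, hS.norm_sq ht, ← Real.exp_nat_mul]; ring_nf
      rw [pow_succ, pow_mul', hsq]
      exact ih _ (by linarith)
  by_contra! h
  have h1 : 1 < ‖S t‖ * Real.exp (μ * t) := by
    rwa [← div_lt_iff₀ (Real.exp_pos _), one_div, ← Real.exp_neg, ← neg_mul]
  obtain ⟨n, hn⟩ := pow_unbounded_of_one_lt M h1
  exact (hn.trans_le (pow_le_pow_right₀ h1.le (Nat.lt_two_pow_self).le)).not_ge (hpow n t ht)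

lemma inner_apply_self (hS : IsSelfAdjointSemigroup S) {t : ℝ} (ht : 0 ≤ t) (x : X) :
    ⟪S t x, x⟫ = ‖S (t / 2) x‖ ^ 2 := by
  have ht2 : 0 ≤ t / 2 := by linarith
  calc ⟪S t x, x⟫ = ⟪S (t / 2) (S (t / 2) x), x⟫ := by rw [← hS.apply_add ht2 ht2, add_halves]
    _ = ⟪S (t / 2) x, S (t / 2) x⟫ := hS.isSymmetric _ ht2 _ _
    _ = ‖S (t / 2) x‖ ^ 2 := real_inner_self_eq_norm_sq _

lemma two_mul_inner_apply_le (hS : IsSelfAdjointSemigroup S) {a δ : ℝ} (ha : 0 ≤ a) (hδ : 0 ≤ δ)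
    (x : X) : 2 * ⟪S (a + δ) x, x⟫ ≤ ⟪S a x, x⟫ + ⟪S (a + δ + δ) x, x⟫ := by
  have ha2 : 0 ≤ a / 2 := by linarith
  set y := S (a / 2) x
  set z := S (a / 2 + δ) x
  have hmid : ⟪S (a + δ) x, x⟫ = ⟪z, y⟫ := by
    rw [show a + δ = a / 2 + (a / 2 + δ) by ring, hS.apply_add ha2 (by linarith)]
    exact hS.isSymmetric _ ha2 _ _
  rw [hmid, hS.inner_apply_self ha, hS.inner_apply_self (by linarith),
    show (a + δ + δ) / 2 = a / 2 + δ by ring]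
  nlinarith [norm_sub_sq_real y z, sq_nonneg ‖y - z‖, real_inner_comm y z]

lemma inner_apply_self_le (hS : IsSelfAdjointSemigroup S)
    (hcontr : ∀ t : ℝ, 0 ≤ t → ‖S t‖ ≤ 1) {t : ℝ} (ht : 0 ≤ t) (x : X) :
    ⟪S t x, x⟫ ≤ ‖x‖ ^ 2 := by
  rw [hS.inner_apply_self ht]
  gcongr
  exact (S _).le_of_opNorm_le (hcontr _ (by linarith)) x |>.trans_eq (one_mul _)

lemma inner_apply_add_le (hS : IsSelfAdjointSemigroup S) (hcontr : ∀ t : ℝ, 0 ≤ t → ‖S t‖ ≤ 1)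
    {t s : ℝ} (ht : 0 ≤ t) (hs : 0 ≤ s) (x : X) : ⟪S (t + s) x, x⟫ ≤ ⟪S t x, x⟫ := by
  rw [hS.inner_apply_self (by linarith), hS.inner_apply_self ht,
    show (t + s) / 2 = s / 2 + t / 2 by ring, hS.apply_add (by linarith) (by linarith)]
  gcongr
  exact (S _).le_of_opNorm_le (hcontr _ (by linarith)) _ |>.trans_eq (one_mul _)

lemma norm_sub_le_div (hS : IsSelfAdjointSemigroup S) (hcontr : ∀ t : ℝ, 0 ≤ t → ‖S t‖ ≤ 1)
    {u δ : ℝ} (hu : 0 < u) (hδ : 0 < δ) : ‖S u - S (u + δ)‖ ≤ δ / u := by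
  have hsymm : ((S u - S (u + δ) : X →L[ℝ] X) : X →ₗ[ℝ] X).IsSymmetric :=
    (hS.isSymmetric u hu.le).sub (hS.isSymmetric _ (by linarith))
  rw [ContinuousLinearMap.norm_eq_iSup_rayleighQuotient _ hsymm]
  refine ciSup_le fun x => ?_
  have hψ : ⟪(S u - S (u + δ)) x, x⟫ = ⟪S u x, x⟫ - ⟪S (u + δ) x, x⟫ := inner_sub_left _ _ _
  have h0 : 0 ≤ ⟪(S u - S (u + δ)) x, x⟫ := by
    rw [hψ]; linarith [hS.inner_apply_add_le hcontr hu.le hδ.le x]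
  have h1 : ⟪(S u - S (u + δ)) x, x⟫ ≤ δ / u * ‖x‖ ^ 2 := by
    rw [hψ]
    refine sub_le_div_mul_of_midpoint_convex hδ hu
      (fun a ha => hS.two_mul_inner_apply_le ha hδ.le x) (fun a ha => ?_)
      (fun a ha => hS.inner_apply_self_le hcontr ha x)
    rw [hS.inner_apply_self ha]; positivity
  simp only [ContinuousLinearMap.rayleighQuotient, ContinuousLinearMap.reApplyInnerSelf_apply,
    RCLike.re_to_real]
  rw [abs_of_nonneg (div_nonneg h0 (by positivity))]
  exact div_le_of_le_mul₀ (by positivity) (by positivity) h1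

lemma norm_sub_le_rpow_mul_exp (hS : IsSelfAdjointSemigroup S) (hμ : 0 ≤ μ)
    (hdecay : ∀ t : ℝ, 0 ≤ t → ‖S t‖ ≤ Real.exp (-μ * t)) (hα0 : 0 ≤ α) (hα1 : α ≤ 1)
    {u δ : ℝ} (hu : 0 < u) (hδ : 0 < δ) :
    ‖S u - S (u + δ)‖ ≤ 2 * (δ / u) ^ α * Real.exp (-(μ / 2) * u) := by
  have hcontr : ∀ t : ℝ, 0 ≤ t → ‖S t‖ ≤ 1 := fun t => norm_le_one_of_norm_le_exp hμ hdecay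
  have hu2 : 0 < u / 2 := half_pos hu
  have hfactor : S u - S (u + δ) = (S (u / 2) - S (u / 2 + δ)).comp (S (u / 2)) := by
    rw [ContinuousLinearMap.sub_comp, ← hS.map_add _ _ hu2.le hu2.le,
      ← hS.map_add _ _ (by linarith) hu2.le, add_halves, show u / 2 + δ + u / 2 = u + δ by ring]
  have hsmooth : ‖S (u / 2) - S (u / 2 + δ)‖ ≤ 2 * min (δ / u) 1 := by
    rw [mul_min_of_nonneg _ _ zero_le_two, mul_one]
    refine le_min ?_ ?_
    · calc ‖S (u / 2) - S (u / 2 + δ)‖ ≤ δ / (u / 2) := hS.norm_sub_le_div hcontr hu2 hδ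
        _ = 2 * (δ / u) := by field_simp
    · calc ‖S (u / 2) - S (u / 2 + δ)‖ ≤ ‖S (u / 2)‖ + ‖S (u / 2 + δ)‖ := norm_sub_le _ _
        _ ≤ 1 + 1 := add_le_add (hcontr _ hu2.le) (hcontr _ (by linarith))
        _ = 2 := one_add_one_eq_two
  have hmin : min (δ / u) 1 ≤ (δ / u) ^ α := by
    simpa using min_le_rpow_mul_rpow (div_pos hδ hu).le zero_le_one hα0 hα1
  calc ‖S u - S (u + δ)‖ ≤ ‖S (u / 2) - S (u / 2 + δ)‖ * ‖S (u / 2)‖ :=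
        hfactor ▸ ContinuousLinearMap.opNorm_comp_le _ _
    _ ≤ (2 * (δ / u) ^ α) * Real.exp (-μ * (u / 2)) := by
        gcongr
        · exact hsmooth.trans (by gcongr)
        · exact hdecay _ hu2.le
    _ = 2 * (δ / u) ^ α * Real.exp (-(μ / 2) * u) := by ring_nf

lemma continuousOn_Ioi (hS : IsSelfAdjointSemigroup S) (hcontr : ∀ t : ℝ, 0 ≤ t → ‖S t‖ ≤ 1) :
    ContinuousOn S (Ioi 0) := by
  have hlip : ∀ a > 0, LipschitzOnWith (Real.toNNReal a⁻¹) S (Ici a) := by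
    intro a ha
    refine LipschitzOnWith.of_dist_le_mul fun s hs t ht => ?_
    wlog hst : s ≤ t generalizing s t
    · rw [dist_comm, dist_comm s]; exact this t ht s hs (le_of_not_ge hst)
    rcases hst.eq_or_lt with rfl | hlt
    · simp
    have hs0 : 0 < s := ha.trans_le hs
    rw [dist_eq_norm, Real.dist_eq, abs_sub_comm, abs_of_pos (sub_pos.2 hlt),
      Real.coe_toNNReal _ (inv_nonneg.2 ha.le)]
    calc ‖S s - S t‖ = ‖S s - S (s + (t - s))‖ := by rw [add_sub_cancel]
      _ ≤ (t - s) / s := hS.norm_sub_le_div hcontr hs0 (sub_pos.2 hlt)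
      _ ≤ (t - s) / a := div_le_div_of_nonneg_left (sub_pos.2 hlt).le ha hs
      _ = a⁻¹ * (t - s) := div_eq_inv_mul _ _
  intro u hu
  exact ((hlip (u / 2) (half_pos hu)).continuousOn.continuousAt
    (Ici_mem_nhds (half_lt_self hu))).continuousWithinAt

lemma intervalIntegrable_apply_sub (hS : IsSelfAdjointSemigroup S)
    (hcontr : ∀ t : ℝ, 0 ≤ t → ‖S t‖ ≤ 1) (hf : ContinuousOn f (Icc 0 T)) {a b c : ℝ}
    (ha : 0 ≤ a) (hab : a ≤ b) (hbc : b ≤ c) (hbT : b ≤ T) :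
    IntervalIntegrable (fun s => S (c - s) (f s)) volume a b := by
  rw [intervalIntegrable_iff_integrableOn_Ioo_of_le hab]
  have hsub : Ioo a b ⊆ Icc 0 T := fun s hs => ⟨ha.trans hs.1.le, hs.2.le.trans hbT⟩
  have hcont : ContinuousOn (fun s => S (c - s) (f s)) (Ioo a b) :=
    ((hS.continuousOn_Ioi hcontr).comp (continuousOn_const.sub continuousOn_id)
      fun s hs => sub_pos.2 (hs.2.trans_le hbc)).clm_apply (hf.mono hsub)
  refine Integrable.mono' (integrableOn_const (C := supNorm T f) measure_Ioo_lt_top.ne)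
    (hcont.aestronglyMeasurable measurableSet_Ioo) ?_
  filter_upwards [ae_restrict_mem measurableSet_Ioo] with s hs
  exact ((S _).le_of_opNorm_le_of_le (hcontr _ (by linarith [hs.2]))
    (norm_le_supNorm hf (hsub hs))).trans_eq (one_mul _)

lemma norm_integral_apply_sub_sub_le (hS : IsSelfAdjointSemigroup S) (hμ : 0 < μ)
    (hdecay : ∀ t : ℝ, 0 ≤ t → ‖S t‖ ≤ Real.exp (-μ * t)) (hα0 : 0 ≤ α) (hα1 : α < 1)
    {N t' t : ℝ} (ht' : 0 ≤ t') (htt' : t' < t) (hf : ∀ s ∈ Icc 0 t', ‖f s‖ ≤ N) :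
    ‖∫ s in (0 : ℝ)..t', (S (t - s) (f s) - S (t' - s) (f s))‖
      ≤ 2 ^ (2 - α) * Real.Gamma (1 - α) * μ⁻¹ ^ (1 - α) * N * (t - t') ^ α := by
  have hN : 0 ≤ N := (norm_nonneg _).trans (hf 0 ⟨le_rfl, ht'⟩)
  have hδ : 0 < t - t' := sub_pos.2 htt'
  have hpt : ∀ s ∈ Ioc 0 t', s ≠ t' → ‖S (t - s) (f s) - S (t' - s) (f s)‖
      ≤ 2 * N * (t - t') ^ α * ((t' - s) ^ (-α) * Real.exp (-(μ / 2 * (t' - s)))) := by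
    intro s hs hst
    have hu : 0 < t' - s := sub_pos.2 (lt_of_le_of_ne hs.2 hst)
    have h := hS.norm_sub_le_rpow_mul_exp hμ.le hdecay hα0 hα1.le hu hδ
    rw [sub_add_sub_cancel'] at h
    calc ‖S (t - s) (f s) - S (t' - s) (f s)‖ = ‖(S (t' - s) - S (t - s)) (f s)‖ := by
          rw [norm_sub_rev]; rfl
      _ ≤ 2 * ((t - t') / (t' - s)) ^ α * Real.exp (-(μ / 2) * (t' - s)) * N :=
          (S _ - S _).le_of_opNorm_le_of_le h (hf s (Ioc_subset_Icc_self hs))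
      _ = 2 * N * (t - t') ^ α * ((t' - s) ^ (-α) * Real.exp (-(μ / 2 * (t' - s)))) := by
          rw [Real.div_rpow hδ.le hu.le, Real.rpow_neg hu.le]; ring_nf
  have hc : 0 < μ / 2 := half_pos hμ
  calc ‖∫ s in (0 : ℝ)..t', (S (t - s) (f s) - S (t' - s) (f s))‖
      ≤ ∫ s in (0 : ℝ)..t',
          2 * N * (t - t') ^ α * ((t' - s) ^ (-α) * Real.exp (-(μ / 2 * (t' - s)))) := by
        refine intervalIntegral.norm_integral_le_of_norm_le ht' ?_
          ((intervalIntegrable_sub_rpow_mul_exp hα1 hc ht').const_mul _)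
        filter_upwards [Measure.ae_ne volume t'] with s hst hs using hpt s hs hst
    _ ≤ 2 * N * (t - t') ^ α * ((μ / 2)⁻¹ ^ (1 - α) * Real.Gamma (1 - α)) := by
        rw [intervalIntegral.integral_const_mul]
        gcongr
        exact integral_sub_rpow_mul_exp_le hα1 hc ht'
    _ = 2 ^ (2 - α) * Real.Gamma (1 - α) * μ⁻¹ ^ (1 - α) * N * (t - t') ^ α := by
        rw [inv_div, div_eq_mul_inv, Real.mul_rpow zero_le_two (inv_nonneg.2 hμ.le),
          show 2 - α = 1 + (1 - α) by ring, Real.rpow_add zero_lt_two, Real.rpow_one]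
        ring

lemma norm_integral_sub_integral_le (hS : IsSelfAdjointSemigroup S) (hμ : 0 < μ)
    (hdecay : ∀ t : ℝ, 0 ≤ t → ‖S t‖ ≤ Real.exp (-μ * t)) (hα0 : 0 ≤ α) (hα1 : α < 1)
    (hf : ContinuousOn f (Icc 0 T)) {t' t : ℝ} (ht' : 0 ≤ t') (htt' : t' < t) (ht : t ≤ T) :
    ‖(∫ s in (0 : ℝ)..t, S (t - s) (f s)) - ∫ s in (0 : ℝ)..t', S (t' - s) (f s)‖
      ≤ (1 + 2 ^ (2 - α) * Real.Gamma (1 - α)) * μ⁻¹ ^ (1 - α) * supNorm T f * (t - t') ^ α := by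
  have hcontr : ∀ t : ℝ, 0 ≤ t → ‖S t‖ ≤ 1 := fun t => norm_le_one_of_norm_le_exp hμ.le hdecay
  have hfN : ∀ s ∈ Icc 0 T, ‖f s‖ ≤ supNorm T f := fun s hs => norm_le_supNorm hf hs
  have hI₁ := hS.intervalIntegrable_apply_sub hcontr hf le_rfl ht' htt'.le (htt'.le.trans ht)
  have hI₂ := hS.intervalIntegrable_apply_sub hcontr hf ht' htt'.le le_rfl ht
  have hI₃ := hS.intervalIntegrable_apply_sub hcontr hf le_rfl ht' le_rfl (htt'.le.trans ht)
  have hsplit : (∫ s in (0 : ℝ)..t, S (t - s) (f s)) - ∫ s in (0 : ℝ)..t', S (t' - s) (f s)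
      = (∫ s in (0 : ℝ)..t', (S (t - s) (f s) - S (t' - s) (f s)))
        + ∫ s in t'..t, S (t - s) (f s) := by
    rw [← intervalIntegral.integral_add_adjacent_intervals hI₁ hI₂,
      intervalIntegral.integral_sub hI₁ hI₃]
    abel
  have hnear := hS.norm_integral_apply_sub_sub_le hμ hdecay hα0 hα1 ht' htt'
    fun s hs => hfN s ⟨hs.1, hs.2.trans (htt'.le.trans ht)⟩
  have hfar := norm_integral_apply_sub_le hμ hdecay hα0 hα1.le htt'.le
    fun s hs => hfN s ⟨ht'.trans hs.1, hs.2.trans ht⟩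
  rw [hsplit]
  refine (norm_add_le _ _).trans ?_
  linarith

theorem holderNorm_integral_le (hS : IsSelfAdjointSemigroup S) (hμ : 0 < μ)
    (hdecay : ∀ t : ℝ, 0 ≤ t → ‖S t‖ ≤ Real.exp (-μ * t)) (hT : 0 ≤ T) (hα : α ∈ Ico 0 1)
    (hf : ContinuousOn f (Icc 0 T)) :
    holderNorm α T (fun t => ∫ s in (0 : ℝ)..t, S (t - s) (f s))
      ≤ (T ^ α + 1 + 2 ^ (2 - α) * Real.Gamma (1 - α)) * μ⁻¹ ^ (1 - α) * supNorm T f := by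
  obtain ⟨hα0, hα1⟩ := hα
  have hΓ : 0 < Real.Gamma (1 - α) := Real.Gamma_pos_of_pos (by linarith)
  have hN := supNorm_nonneg T f
  have hsup : supNorm T (fun t => ∫ s in (0 : ℝ)..t, S (t - s) (f s))
      ≤ T ^ α * μ⁻¹ ^ (1 - α) * supNorm T f := by
    refine supNorm_le (by positivity) fun t ⟨ht0, htT⟩ => ?_
    calc ‖∫ s in (0 : ℝ)..t, S (t - s) (f s)‖ ≤ supNorm T f * (t - 0) ^ α * μ⁻¹ ^ (1 - α) :=
          norm_integral_apply_sub_le hμ hdecay hα0 hα1.le ht0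
            fun s hs => norm_le_supNorm hf ⟨hs.1, hs.2.trans htT⟩
      _ ≤ supNorm T f * T ^ α * μ⁻¹ ^ (1 - α) := by rw [sub_zero]; gcongr
      _ = T ^ α * μ⁻¹ ^ (1 - α) * supNorm T f := by ring
  have hsemi := holderSemi_le (α := α) (by positivity) fun s hs t ht hst =>
    hS.norm_integral_sub_integral_le hμ hdecay hα0 hα1 hf hs.1 hst ht.2
  unfold holderNorm
  linarith

end IsSelfAdjointSemigroup

theorem stmt0_general {X : Type*} [NormedAddCommGroup X] [InnerProductSpace ℝ X] [CompleteSpace X]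
    (S : ℝ → X →L[ℝ] X) (M μ : ℝ) (hμ : 0 < μ)
    (hSadd : ∀ s t : ℝ, 0 ≤ s → 0 ≤ t → S (s + t) = (S s).comp (S t))
    (hSselfadj : ∀ t : ℝ, 0 ≤ t → ∀ x y : X, ⟪S t x, y⟫ = ⟪x, S t y⟫)
    (hSbound : ∀ t : ℝ, 0 ≤ t → ‖S t‖ ≤ M * Real.exp (-μ * t))
    (T α : ℝ) (hT : 0 < T) (hα : α ∈ Ico (0:ℝ) 1) :
    ∃ C > 0, ∀ ε : ℝ, 0 < ε → ∀ f : ℝ → X, ContinuousOn f (Icc 0 T) →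
      holderNorm α T (fun t => ∫ s in (0:ℝ)..t, S ((t - s) / ε ^ 2) (f s)) ≤
        C * ε ^ (2 - 2 * α) * supNorm T f := by
  have hS : IsSelfAdjointSemigroup S := ⟨hSadd, hSselfadj⟩
  have hdecay : ∀ t : ℝ, 0 ≤ t → ‖S t‖ ≤ Real.exp (-μ * t) := fun t => hS.norm_le_exp hSbound
  have hΓ : 0 < Real.Gamma (1 - α) := Real.Gamma_pos_of_pos (by linarith [hα.2])
  refine ⟨(T ^ α + 1 + 2 ^ (2 - α) * Real.Gamma (1 - α)) * μ⁻¹ ^ (1 - α), by positivity,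
    fun ε hε f hf => ?_⟩
  have hε2 : 0 < ε ^ 2 := by positivity
  have hdecayε : ∀ t : ℝ, 0 ≤ t → ‖S (t / ε ^ 2)‖ ≤ Real.exp (-(μ / ε ^ 2) * t) := fun t ht =>
    (hdecay _ (by positivity)).trans_eq (by ring_nf)
  have hscale : (μ / ε ^ 2)⁻¹ ^ (1 - α) = μ⁻¹ ^ (1 - α) * ε ^ (2 - 2 * α) := by
    rw [inv_div, div_eq_mul_inv, Real.mul_rpow hε2.le (inv_nonneg.2 hμ.le), ← Real.rpow_natCast,
      ← Real.rpow_mul hε.le]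
    push_cast
    ring_nf
  calc _ ≤ (T ^ α + 1 + 2 ^ (2 - α) * Real.Gamma (1 - α)) * (μ / ε ^ 2)⁻¹ ^ (1 - α)
        * supNorm T f :=
        (hS.comp_div hε2.le).holderNorm_integral_le (div_pos hμ hε2) hdecayε hT.le hα hf
    _ = _ := by rw [hscale]; ring

/-- If `L` is self-adjoint and generates an analytic semigroup `S t = e^{tL}`
with `‖S t‖ ≤ M e^{-μ t}`, then for `α ∈ [0,1)` there is a constant `C` such that for all
`ε > 0` and continuous `f : [0,T] → X`,
`‖t ↦ ∫₀ᵗ e^{(t-s)L/ε²} f(s) ds‖_{C^α([0,T];X)} ≤ C ε^{2-2α} ‖f‖_{C⁰([0,T];X)}`. -/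
theorem stmt0 {X : Type*} [NormedAddCommGroup X] [InnerProductSpace ℝ X] [CompleteSpace X]
    (S : ℝ → X →L[ℝ] X) (M μ : ℝ) (hM : 1 ≤ M) (hμ : 0 < μ)
    (hS0 : S 0 = ContinuousLinearMap.id ℝ X)
    (hSadd : ∀ s t : ℝ, 0 ≤ s → 0 ≤ t → S (s + t) = (S s).comp (S t))
    (hSselfadj : ∀ t : ℝ, 0 ≤ t → ∀ x y : X, ⟪S t x, y⟫ = ⟪x, S t y⟫)
    (hSbound : ∀ t : ℝ, 0 ≤ t → ‖S t‖ ≤ M * Real.exp (-μ * t))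
    (T α : ℝ) (hT : 0 < T) (hα : α ∈ Ico (0:ℝ) 1) :
    ∃ C > 0, ∀ ε : ℝ, 0 < ε → ∀ f : ℝ → X, ContinuousOn f (Icc 0 T) →
      holderNorm α T (fun t => ∫ s in (0:ℝ)..t, S ((t - s) / ε ^ 2) (f s)) ≤
        C * ε ^ (2 - 2 * α) * supNorm T f :=
  stmt0_general S M μ hμ hSadd hSselfadj hSbound T α hT hα
end

section
/- For H ∈ (0,1) and α ∈ (0,H), and any λ > 0, one has the bound ∫₀ᵗ ∫₀ᵗ u^{−α} v^{−α} e^{−λu} e^{−λv} |u−v|^{2H−2} du dv ≤ 2 B(1−α, 2H−1) ∫₀^∞ v^{2(H−α)−1} e^{−λv} dv for all t > 0, where B denotes the Beta function; in particular the left-hand side is bounded uniformly in t. -/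
/-!
The kernel is symmetric in `(u, v)`, so the double integral is at most twice the integral over
the triangle `v ≤ u`. There `e^{-λv} ≤ 1`, and the substitution `v = u w` turns
`∫₀ᵘ v^{-α} (u - v)^{2H-2} dv` into `u^{2H-1-α} B(1-α, 2H-1)`; the remaining integral in `u`
is dominated by its extension to `(0, ∞)`. Since `ofReal (∫ f) ≤ ∫⁻ ofReal f` holds for every
real function, all estimates are carried out with `ℝ≥0∞`-valued integrals and the integrability
of the kernel on the square never has to be proved.
-/

open MeasureTheory Set Function
open scoped ENNReal

/-- Euler's Beta function `B(a,b) = ∫₀¹ w^{a−1}(1−w)^{b−1} dw`. -/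
noncomputable def betaFn (a b : ℝ) : ℝ :=
  ∫ w in (0:ℝ)..1, w ^ (a - 1) * (1 - w) ^ (b - 1)

section Lebesgue

variable {α β : Type*} [MeasurableSpace α] [MeasurableSpace β] {μ : Measure α} {ν : Measure β}

theorem ofReal_integral_le_lintegral_ofReal (f : α → ℝ) :
    ENNReal.ofReal (∫ x, f x ∂μ) ≤ ∫⁻ x, ENNReal.ofReal (f x) ∂μ := by
  by_cases hf : Integrable f μ
  · calc ENNReal.ofReal (∫ x, f x ∂μ) ≤ ENNReal.ofReal (∫ x, max (f x) 0 ∂μ) :=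
          ENNReal.ofReal_le_ofReal (integral_mono hf hf.pos_part fun x => le_max_left _ _)
      _ = ∫⁻ x, ENNReal.ofReal (max (f x) 0) ∂μ :=
          ofReal_integral_eq_lintegral_ofReal hf.pos_part (ae_of_all _ fun x => le_max_right _ _)
      _ = ∫⁻ x, ENNReal.ofReal (f x) ∂μ := by simp [ENNReal.ofReal_max]
  · simp [integral_undef hf]

theorem ofReal_integral_integral_le_lintegral_lintegral (f : α → β → ℝ) :
    ENNReal.ofReal (∫ x, ∫ y, f x y ∂ν ∂μ) ≤ ∫⁻ x, ∫⁻ y, ENNReal.ofReal (f x y) ∂ν ∂μ :=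
  (ofReal_integral_le_lintegral_ofReal _).trans
    (lintegral_mono fun _ => ofReal_integral_le_lintegral_ofReal _)

theorem lintegral_lintegral_le_two_mul_of_symm [LinearOrder α] [TopologicalSpace α]
    [OrderClosedTopology α] [SecondCountableTopology α] [OpensMeasurableSpace α] [SFinite μ]
    {f : α → α → ℝ≥0∞} (hf : Measurable (uncurry f)) (hsymm : ∀ x y, f x y = f y x) :
    ∫⁻ x, ∫⁻ y, f x y ∂μ ∂μ ≤ 2 * ∫⁻ x, ∫⁻ y, (Iic x).indicator (f x) y ∂μ ∂μ := by
  set g : α → α → ℝ≥0∞ := fun x => (Iic x).indicator (f x)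
  have hg : Measurable (uncurry g) :=
    hf.indicator (measurableSet_le measurable_snd measurable_fst)
  have hle : ∀ x y, f x y ≤ g x y + g y x := fun x y => by
    rcases le_total y x with hyx | hxy
    · exact (indicator_of_mem (mem_Iic.2 hyx) (f x)).ge.trans le_self_add
    · rw [hsymm]
      exact (indicator_of_mem (mem_Iic.2 hxy) (f y)).ge.trans le_add_self
  calc ∫⁻ x, ∫⁻ y, f x y ∂μ ∂μ ≤ ∫⁻ x, ∫⁻ y, g x y + g y x ∂μ ∂μ :=
        lintegral_mono fun x => lintegral_mono fun y => hle x y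
    _ = ∫⁻ x, ∫⁻ y, g x y ∂μ ∂μ + ∫⁻ x, ∫⁻ y, g y x ∂μ ∂μ := by
        have hgx : Measurable fun x => ∫⁻ y, g x y ∂μ := hg.lintegral_prod_right'
        rw [← lintegral_add_left hgx]
        exact lintegral_congr fun x => lintegral_add_left (hg.comp measurable_prodMk_left) _
    _ = 2 * ∫⁻ x, ∫⁻ y, g x y ∂μ ∂μ := by
        rw [lintegral_lintegral_swap (f := fun x y => g y x) (hg.comp measurable_swap).aemeasurable,
          two_mul]

end Lebesgue

section Beta

variable {p c : ℝ}

theorem betaFn_nonneg (a b : ℝ) : 0 ≤ betaFn a b :=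
  intervalIntegral.integral_nonneg zero_le_one fun _ hw =>
    mul_nonneg (Real.rpow_nonneg hw.1 _) (Real.rpow_nonneg (sub_nonneg.2 hw.2) _)

theorem intervalIntegrable_rpow_mul_sub_rpow (hp : -1 < p) (hc : -1 < c) {u : ℝ} (hu : 0 < u) :
    IntervalIntegrable (fun v : ℝ => v ^ p * (u - v) ^ c) volume 0 u := by
  -- each factor is continuous away from its own singular endpoint, so split at `u / 2`
  have hleft : IntervalIntegrable (fun v : ℝ => v ^ p * (u - v) ^ c) volume 0 (u / 2) := by
    refine (intervalIntegral.intervalIntegrable_rpow' hp).mul_continuousOn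
      (ContinuousOn.rpow_const (by fun_prop) fun v hv => Or.inl ?_)
    rw [uIcc_of_le (by positivity)] at hv
    exact (sub_pos.2 (by linarith [hv.2])).ne'
  have hright : IntervalIntegrable (fun v : ℝ => v ^ p * (u - v) ^ c) volume (u / 2) u := by
    have h := (intervalIntegral.intervalIntegrable_rpow' (a := 0) (b := u / 2) hc).comp_sub_left u
    rw [sub_zero, show u - u / 2 = u / 2 by ring] at h
    refine h.symm.continuousOn_mul (ContinuousOn.rpow_const (by fun_prop) fun v hv => Or.inl ?_)
    rw [uIcc_of_le (by linarith)] at hv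
    exact (show 0 < v by linarith [hv.1]).ne'
  exact hleft.trans hright

theorem integral_rpow_mul_sub_rpow {u : ℝ} (hu : 0 < u) :
    ∫ v in (0:ℝ)..u, v ^ p * (u - v) ^ c = u ^ (p + c + 1) * betaFn (p + 1) (c + 1) := by
  have hscale : ∀ w ∈ uIcc (0:ℝ) 1,
      (u * w) ^ p * (u - u * w) ^ c = u ^ (p + c) * (w ^ p * (1 - w) ^ c) := fun w hw => by
    rw [uIcc_of_le zero_le_one] at hw
    rw [Real.mul_rpow hu.le hw.1, show u - u * w = u * (1 - w) by ring,
      Real.mul_rpow hu.le (sub_nonneg.2 hw.2), Real.rpow_add hu]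
    ring
  have h := intervalIntegral.smul_integral_comp_mul_left
    (fun v : ℝ => v ^ p * (u - v) ^ c) u (a := 0) (b := 1)
  rw [mul_zero, mul_one] at h
  rw [← h, intervalIntegral.integral_congr hscale, intervalIntegral.integral_const_mul, smul_eq_mul,
    betaFn, show p + c + 1 = 1 + (p + c) by ring, Real.rpow_add hu 1, Real.rpow_one]
  simp only [add_sub_cancel_right]
  ring

theorem lintegral_rpow_mul_sub_rpow (hp : -1 < p) (hc : -1 < c) {u : ℝ} (hu : 0 < u) :
    ∫⁻ v in Ioc 0 u, ENNReal.ofReal (v ^ p * (u - v) ^ c) =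
      ENNReal.ofReal (u ^ (p + c + 1) * betaFn (p + 1) (c + 1)) := by
  rw [← integral_rpow_mul_sub_rpow hu, intervalIntegral.integral_of_le hu.le,
    ofReal_integral_eq_lintegral_ofReal (intervalIntegrable_rpow_mul_sub_rpow hp hc hu).1]
  exact ae_restrict_of_forall_mem measurableSet_Ioc fun v hv =>
    mul_nonneg (Real.rpow_nonneg hv.1.le _) (Real.rpow_nonneg (sub_nonneg.2 hv.2) _)

end Beta

section Kernel

noncomputable def weightedRieszKernel (p c lam u v : ℝ) : ℝ :=
  u ^ p * v ^ p * Real.exp (-lam * u) * Real.exp (-lam * v) * |u - v| ^ c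

variable {p c lam : ℝ}

theorem weightedRieszKernel_comm (u v : ℝ) :
    weightedRieszKernel p c lam u v = weightedRieszKernel p c lam v u := by
  rw [weightedRieszKernel, weightedRieszKernel, abs_sub_comm]
  ring

theorem measurable_weightedRieszKernel : Measurable (uncurry (weightedRieszKernel p c lam)) := by
  unfold weightedRieszKernel uncurry
  fun_prop

theorem weightedRieszKernel_le (hlam : 0 ≤ lam) {u v : ℝ} (hv : v ∈ Ioc 0 u) :
    weightedRieszKernel p c lam u v ≤ u ^ p * Real.exp (-lam * u) * (v ^ p * (u - v) ^ c) := by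
  have hu : 0 < u := hv.1.trans_le hv.2
  have hnonneg : 0 ≤ u ^ p * Real.exp (-lam * u) * (v ^ p * (u - v) ^ c) :=
    mul_nonneg (mul_nonneg (Real.rpow_nonneg hu.le _) (Real.exp_nonneg _))
      (mul_nonneg (Real.rpow_nonneg hv.1.le _) (Real.rpow_nonneg (sub_nonneg.2 hv.2) _))
  have hexp : Real.exp (-lam * v) ≤ 1 :=
    Real.exp_le_one_iff.2 (by nlinarith [mul_nonneg hlam hv.1.le])
  calc weightedRieszKernel p c lam u v
      = u ^ p * Real.exp (-lam * u) * (v ^ p * (u - v) ^ c) * Real.exp (-lam * v) := by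
        rw [weightedRieszKernel, abs_of_nonneg (sub_nonneg.2 hv.2)]
        ring
    _ ≤ u ^ p * Real.exp (-lam * u) * (v ^ p * (u - v) ^ c) :=
        mul_le_of_le_one_right hnonneg hexp

theorem lintegral_weightedRieszKernel_Ioc_le (hp : -1 < p) (hc : -1 < c) (hlam : 0 ≤ lam)
    {u : ℝ} (hu : 0 < u) :
    ∫⁻ v in Ioc 0 u, ENNReal.ofReal (weightedRieszKernel p c lam u v) ≤
      ENNReal.ofReal (betaFn (p + 1) (c + 1) * (u ^ (2 * p + c + 1) * Real.exp (-lam * u))) := by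
  have hweight : 0 ≤ u ^ p * Real.exp (-lam * u) :=
    mul_nonneg (Real.rpow_nonneg hu.le _) (Real.exp_nonneg _)
  calc ∫⁻ v in Ioc 0 u, ENNReal.ofReal (weightedRieszKernel p c lam u v)
      ≤ ∫⁻ v in Ioc 0 u, ENNReal.ofReal (u ^ p * Real.exp (-lam * u)) *
          ENNReal.ofReal (v ^ p * (u - v) ^ c) :=
        setLIntegral_mono' measurableSet_Ioc fun v hv => by
          rw [← ENNReal.ofReal_mul hweight]
          exact ENNReal.ofReal_le_ofReal (weightedRieszKernel_le hlam hv)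
    _ = ENNReal.ofReal (u ^ p * Real.exp (-lam * u)) *
          ENNReal.ofReal (u ^ (p + c + 1) * betaFn (p + 1) (c + 1)) := by
        rw [lintegral_const_mul' _ _ ENNReal.ofReal_ne_top, lintegral_rpow_mul_sub_rpow hp hc hu]
    _ = ENNReal.ofReal (betaFn (p + 1) (c + 1) * (u ^ (2 * p + c + 1) * Real.exp (-lam * u))) := by
        rw [← ENNReal.ofReal_mul hweight, show 2 * p + c + 1 = p + (p + c + 1) by ring,
          Real.rpow_add hu p]
        congr 1
        ring

theorem lintegral_lintegral_weightedRieszKernel_le (hp : -1 < p) (hc : -1 < c)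
    (hq : -1 < 2 * p + c + 1) (hlam : 0 < lam) (t : ℝ) :
    ∫⁻ u in Ioc 0 t, ∫⁻ v in Ioc 0 t, ENNReal.ofReal (weightedRieszKernel p c lam u v) ≤
      ENNReal.ofReal (2 * betaFn (p + 1) (c + 1) *
        ∫ u in Ioi 0, u ^ (2 * p + c + 1) * Real.exp (-lam * u)) := by
  have hmeas : Measurable (uncurry fun u v => ENNReal.ofReal (weightedRieszKernel p c lam u v)) :=
    ENNReal.measurable_ofReal.comp measurable_weightedRieszKernel
  have hbelow : ∀ u ∈ Ioc 0 t, ∫⁻ v in Ioc 0 t,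
        (Iic u).indicator (fun v => ENNReal.ofReal (weightedRieszKernel p c lam u v)) v
        ≤ ENNReal.ofReal (betaFn (p + 1) (c + 1) * (u ^ (2 * p + c + 1) * Real.exp (-lam * u))) :=
    fun u hu => by
      have hsub : Iic u ∩ Ioc 0 t ⊆ Ioc 0 u := fun _ hv => ⟨hv.2.1, hv.1⟩
      rw [lintegral_indicator measurableSet_Iic, Measure.restrict_restrict measurableSet_Iic]
      exact (lintegral_mono_set hsub).trans
        (lintegral_weightedRieszKernel_Ioc_le hp hc hlam.le hu.1)
  have hgamma : IntegrableOn (fun u => u ^ (2 * p + c + 1) * Real.exp (-lam * u)) (Ioi 0) := by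
    simpa using integrableOn_rpow_mul_exp_neg_mul_rpow hq zero_lt_one hlam
  calc ∫⁻ u in Ioc 0 t, ∫⁻ v in Ioc 0 t, ENNReal.ofReal (weightedRieszKernel p c lam u v)
      ≤ 2 * ∫⁻ u in Ioc 0 t, ∫⁻ v in Ioc 0 t,
          (Iic u).indicator (fun v => ENNReal.ofReal (weightedRieszKernel p c lam u v)) v :=
        lintegral_lintegral_le_two_mul_of_symm hmeas fun u v => by rw [weightedRieszKernel_comm]
    _ ≤ 2 * ∫⁻ u in Ioi 0, ENNReal.ofReal
          (betaFn (p + 1) (c + 1) * (u ^ (2 * p + c + 1) * Real.exp (-lam * u))) := by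
        gcongr 2 * ?_
        exact (setLIntegral_mono' measurableSet_Ioc hbelow).trans
          (lintegral_mono_set Ioc_subset_Ioi_self)
    _ = _ := by
        rw [mul_assoc, ENNReal.ofReal_mul zero_le_two, ENNReal.ofReal_ofNat, ← integral_const_mul,
          ofReal_integral_eq_lintegral_ofReal (hgamma.const_mul _)]
        exact ae_restrict_of_forall_mem measurableSet_Ioi fun u hu => mul_nonneg (betaFn_nonneg _ _)
          (mul_nonneg (Real.rpow_nonneg (le_of_lt hu) _) (Real.exp_nonneg _))

end Kernel

/-- For `H ∈ (0,1)` with `H > ½` (so that `2H−2 > −1`) and `α ∈ (0,H)`,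
and any `λ > 0`,
`∫₀ᵗ ∫₀ᵗ u^{−α} v^{−α} e^{−λu} e^{−λv} |u−v|^{2H−2} du dv
  ≤ 2 B(1−α, 2H−1) ∫₀^∞ v^{2(H−α)−1} e^{−λv} dv`
for all `t > 0`; in particular the left-hand side is bounded uniformly in `t`. -/
theorem stmt11 (H α lam : ℝ) (hH : H ∈ Set.Ioo (0:ℝ) 1) (hH2 : 1 / 2 < H)
    (hα : α ∈ Set.Ioo (0:ℝ) H) (hlam : 0 < lam) (t : ℝ) (ht : 0 < t) :
    (∫ u in (0:ℝ)..t, ∫ v in (0:ℝ)..t,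
        u ^ (-α) * v ^ (-α) * Real.exp (-lam * u) * Real.exp (-lam * v) *
          |u - v| ^ (2 * H - 2)) ≤
      2 * betaFn (1 - α) (2 * H - 1) *
        ∫ v in Set.Ioi (0:ℝ), v ^ (2 * (H - α) - 1) * Real.exp (-lam * v) := by
  obtain ⟨-, hH1⟩ := hH
  obtain ⟨-, hαH⟩ := hα
  have hbound := lintegral_lintegral_weightedRieszKernel_le (p := -α) (c := 2 * H - 2)
    (by linarith) (by linarith) (by linarith) hlam t
  rw [show -α + 1 = 1 - α by ring, show 2 * H - 2 + 1 = 2 * H - 1 by ring,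
    show 2 * -α + (2 * H - 2) + 1 = 2 * (H - α) - 1 by ring] at hbound
  have hrhs : 0 ≤ 2 * betaFn (1 - α) (2 * H - 1) *
      ∫ v in Set.Ioi (0:ℝ), v ^ (2 * (H - α) - 1) * Real.exp (-lam * v) :=
    mul_nonneg (mul_nonneg zero_le_two (betaFn_nonneg _ _)) <| setIntegral_nonneg measurableSet_Ioi
      fun v hv => mul_nonneg (Real.rpow_nonneg (le_of_lt hv) _) (Real.exp_nonneg _)
  simp_rw [intervalIntegral.integral_of_le ht.le]
  exact (ENNReal.ofReal_le_ofReal_iff hrhs).1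
    ((ofReal_integral_integral_le_lintegral_lintegral _).trans hbound)
end

section
/- Let X be a Hilbert space, A_c a bounded linear operator on a finite-dimensional subspace N, and 𝓕_c : N³ → N a continuous symmetric trilinear map satisfying ⟨𝓕_c(φ+v,φ+v,φ+v), v⟩ ≤ C_η ‖φ‖⁴ − η ‖v‖⁴ for all v,φ ∈ N (with η, C_η > 0). If c : [0,T₀] → N is C¹ and solves ∂_T c = A_c(c + b̃) + 𝓕_c(c+b̃, c+b̃, c+b̃) + b̃ for a continuous b̃ : [0,T₀] → N, then there exists a constant K depending only on T₀, ‖A_c‖, η, C_η such that sup_{T∈[0,T₀]} ‖c(T)‖² ≤ K (‖c(0)‖² + 1 + sup_{T∈[0,T₀]} ‖b̃(T)‖⁴). -/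
/-!
Let `L = 3‖A‖ + 1`, `C = ‖A‖ + 1 + 2 C_η` and `B = sup ‖b̃‖`. Since `⟪F(u,u,u), c⟫ ≤ C_η ‖b̃‖⁴`
for `u = c + b̃`, Cauchy–Schwarz and `2ab ≤ a² + b²` give the energy inequality
`∂_T ‖c‖² ≤ L ‖c‖² + C (1 + B⁴)`, and Grönwall's inequality then bounds `‖c(T)‖²` by
`e^{L T₀} C (‖c(0)‖² + 1 + B⁴)`.
-/

open Set
open scoped RealInnerProductSpace

lemma le_ciSup_of_isCompact {α : Type*} [TopologicalSpace α] {s : Set α} (hs : IsCompact s)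
    {f : α → ℝ} (hf : ContinuousOn f s) {x : α} (hx : x ∈ s) : f x ≤ ⨆ y : s, f y := by
  have hbdd : BddAbove (range fun y : s => f y) := by
    rw [← image_eq_range]
    exact hs.bddAbove_image hf
  exact le_ciSup hbdd ⟨x, hx⟩

lemma gronwallBound_le_add_mul_exp {δ K ε x : ℝ} (hε : 0 ≤ ε) (hK : 1 ≤ K)
    (hx : 0 ≤ x) : gronwallBound δ K ε x ≤ (δ + ε) * Real.exp (K * x) := by
  have hexp : 1 ≤ Real.exp (K * x) := Real.one_le_exp (by positivity)
  have hεK : ε / K ≤ ε := div_le_self hε hK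
  rw [gronwallBound_of_K_ne_0 (by positivity)]
  nlinarith

section Energy

variable {N : Type*} [NormedAddCommGroup N] [InnerProductSpace ℝ N]

theorem norm_sq_le_gronwallBound_of_inner_deriv_le {c c' : ℝ → N} {K ε a b : ℝ}
    (hc : ∀ t ∈ Icc a b, HasDerivAt c (c' t) t)
    (bound : ∀ t ∈ Ico a b, 2 * ⟪c t, c' t⟫ ≤ K * ‖c t‖ ^ 2 + ε) :
    ∀ t ∈ Icc a b, ‖c t‖ ^ 2 ≤ gronwallBound (‖c a‖ ^ 2) K ε (t - a) := by
  have hderiv : ∀ t ∈ Icc a b, HasDerivAt (‖c ·‖ ^ 2) (2 * ⟪c t, c' t⟫) t :=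
    fun t ht => (hc t ht).norm_sq
  refine le_gronwallBound_of_liminf_deriv_right_le
    (fun t ht => (hderiv t ht).continuousAt.continuousWithinAt) (fun t ht r hr => ?_)
    le_rfl bound
  simpa only [slope_def_field, div_eq_inv_mul] using
    ((hderiv t (Ico_subset_Icc_self ht)).hasDerivWithinAt (s := Ici t)).liminf_right_slope_le hr

/-- The energy inequality for `∂_T c = A (c + b̃) + w + b̃`, where `w = F(c+b̃, c+b̃, c+b̃)`. -/
lemma two_mul_inner_le_of_inner_le (A : N →L[ℝ] N) {η Cη B : ℝ} (hη : 0 ≤ η) (hCη : 0 ≤ Cη)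
    {x y w : N} (hw : ⟪x, w⟫ ≤ Cη * ‖y‖ ^ 4 - η * ‖x‖ ^ 4) (hy : ‖y‖ ≤ B) :
    2 * ⟪x, A (x + y) + w + y⟫
      ≤ (3 * ‖A‖ + 1) * ‖x‖ ^ 2 + (‖A‖ + 1 + 2 * Cη) * (1 + B ^ 4) := by
  have hA : ⟪x, A (x + y)⟫ ≤ ‖A‖ * (‖x‖ + ‖y‖) * ‖x‖ :=
    calc ⟪x, A (x + y)⟫ ≤ ‖x‖ * ‖A (x + y)‖ := real_inner_le_norm _ _
      _ ≤ ‖x‖ * (‖A‖ * ‖x + y‖) := by gcongr; exact A.le_opNorm _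
      _ ≤ ‖A‖ * (‖x‖ + ‖y‖) * ‖x‖ := by
        rw [mul_comm]; gcongr; exact norm_add_le _ _
  have hy' : ⟪x, y⟫ ≤ ‖x‖ * ‖y‖ := real_inner_le_norm _ _
  have hy4 : ‖y‖ ^ 4 ≤ B ^ 4 := by gcongr
  have hy2 : ‖y‖ ^ 2 ≤ 1 + B ^ 4 := by nlinarith [sq_nonneg (‖y‖ ^ 2 - 1)]
  have hnA := norm_nonneg A
  rw [inner_add_right, inner_add_right]
  nlinarith [mul_nonneg hη (pow_nonneg (norm_nonneg x) 4), sq_nonneg (‖x‖ - ‖y‖),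
    mul_nonneg hnA (sq_nonneg (‖x‖ - ‖y‖))]

end Energy

theorem stmt12_general {N : Type*} [NormedAddCommGroup N] [InnerProductSpace ℝ N]
    (T₀ : ℝ) (A : N →L[ℝ] N) (η Cη : ℝ) (hη : 0 < η) (hCη : 0 < Cη) :
    ∃ K > 0, ∀ F : N →L[ℝ] N →L[ℝ] N →L[ℝ] N,
      (∀ u v w : N, F u v w = F v u w ∧ F u v w = F u w v) →
      (∀ v φ : N, ⟪F (φ + v) (φ + v) (φ + v), v⟫ ≤ Cη * ‖φ‖ ^ 4 - η * ‖v‖ ^ 4) →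
      ∀ b c : ℝ → N, ContinuousOn b (Icc 0 T₀) →
      (∀ T ∈ Icc (0:ℝ) T₀,
        HasDerivAt c (A (c T + b T) + F (c T + b T) (c T + b T) (c T + b T) + b T) T) →
      ∀ T ∈ Icc (0:ℝ) T₀,
        ‖c T‖ ^ 2 ≤ K * (‖c 0‖ ^ 2 + 1 + (⨆ S : Icc (0:ℝ) T₀, ‖b (S : ℝ)‖) ^ 4) := by
  set L := 3 * ‖A‖ + 1
  set C := ‖A‖ + 1 + 2 * Cη
  have hL : 1 ≤ L := by have := norm_nonneg A; linarith
  have hC : 1 ≤ C := by have := norm_nonneg A; linarith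
  refine ⟨Real.exp (L * T₀) * C, by positivity, fun F _ hF b c hb hc T hT => ?_⟩
  set B := ⨆ S : Icc (0:ℝ) T₀, ‖b (S : ℝ)‖
  have hbB : ∀ t ∈ Icc (0:ℝ) T₀, ‖b t‖ ≤ B := fun t ht =>
    le_ciSup_of_isCompact isCompact_Icc hb.norm ht
  have hB : 0 ≤ B := Real.iSup_nonneg fun _ => norm_nonneg _
  have hgron := norm_sq_le_gronwallBound_of_inner_deriv_le hc (fun t ht =>
    two_mul_inner_le_of_inner_le A hη.le hCη.le
      (by rw [real_inner_comm, add_comm]; exact hF (c t) (b t)) (hbB t (Ico_subset_Icc_self ht)))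
    T hT
  rw [sub_zero] at hgron
  calc ‖c T‖ ^ 2 ≤ (‖c 0‖ ^ 2 + C * (1 + B ^ 4)) * Real.exp (L * T) :=
        hgron.trans (gronwallBound_le_add_mul_exp (by positivity) hL hT.1)
    _ ≤ C * (‖c 0‖ ^ 2 + 1 + B ^ 4) * Real.exp (L * T₀) := by
        gcongr
        · nlinarith [sq_nonneg ‖c 0‖]
        · exact hT.2
    _ = Real.exp (L * T₀) * C * (‖c 0‖ ^ 2 + 1 + B ^ 4) := by ring

/-- Let `N` be a finite-dimensional Hilbert space, `A` a bounded linear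
operator on `N`, and `η, C_η > 0`. There is a constant `K` (depending only on `T₀`, `‖A‖`,
`η`, `C_η`) such that: for every continuous symmetric trilinear map `F` satisfying the
quartic sign condition `⟪F(φ+v)(φ+v)(φ+v), v⟫ ≤ C_η ‖φ‖⁴ − η ‖v‖⁴`, every continuous
`b̃ : [0,T₀] → N` and every `C¹` solution `c` of
`∂_T c = A(c + b̃) + F(c+b̃, c+b̃, c+b̃) + b̃`, one has
`sup_{T ∈ [0,T₀]} ‖c(T)‖² ≤ K (‖c(0)‖² + 1 + sup_{T ∈ [0,T₀]} ‖b̃(T)‖⁴)`. -/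
theorem stmt12 {N : Type*} [NormedAddCommGroup N] [InnerProductSpace ℝ N]
    [FiniteDimensional ℝ N]
    (T₀ : ℝ) (hT₀ : 0 < T₀) (A : N →L[ℝ] N) (η Cη : ℝ) (hη : 0 < η) (hCη : 0 < Cη) :
    ∃ K > 0, ∀ F : N →L[ℝ] N →L[ℝ] N →L[ℝ] N,
      (∀ u v w : N, F u v w = F v u w ∧ F u v w = F u w v) →
      (∀ v φ : N, ⟪F (φ + v) (φ + v) (φ + v), v⟫ ≤ Cη * ‖φ‖ ^ 4 - η * ‖v‖ ^ 4) →
      ∀ b c : ℝ → N, ContinuousOn b (Icc 0 T₀) →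
      (∀ T ∈ Icc (0:ℝ) T₀,
        HasDerivAt c (A (c T + b T) + F (c T + b T) (c T + b T) (c T + b T) + b T) T) →
      ∀ T ∈ Icc (0:ℝ) T₀,
        ‖c T‖ ^ 2 ≤ K * (‖c 0‖ ^ 2 + 1 + (⨆ S : Icc (0:ℝ) T₀, ‖b (S : ℝ)‖) ^ 4) :=
  stmt12_general T₀ A η Cη hη hCη
end

section
/- Attractivity a priori bound: under the semigroup estimates ‖e^{tL}‖ ≤ M and ‖e^{tL}‖_{L(X^{−α},X)} ≤ M(1+t^{−α}) with α ∈ [0,1), suppose u is a maximal mild solution of du = (Lu + ε²Au + 𝓕(u)) dt + ε^{2H+1} dW with ‖A‖_{L(X,X^{−α})} ≤ C, ‖𝓕(u)‖_{X^{−α}} ≤ C‖u‖³, ‖u₀‖ ≤ δ ε^{1−κ}, and suppose the stochastic convolution satisfies sup_{t∈[0,t_ε]} ‖W_L(t)‖ ≤ ε^{−2H−κ} where t_ε = O(ln(ε^{−2H})) and κ ∈ [0,1). Then for any D > Mδ + 2 and ε sufficiently small, sup_{t∈[0,t_ε]} ‖u(t)‖ ≤ D ε^{1−κ}. -/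
/-!
Put `p = ε^(1-κ)`. As long as `‖u‖ ≤ D p` on `[0, t)`, the drift `ε² A u + 𝓕(u)` is
`O(p³)` in `X^{-α}` (using `ε ≤ p`), and the smoothing bound `M (1 + s^{-α})` is integrable
at `s = 0`, so the convolution term of the mild formula is
`O(p³ (1 + t_ε)) = O(p² ln ε⁻¹) · p`, which is at most `p` for small `ε`. Together with
`M δ p` from the initial datum and `p` from the noise, this gives
`‖u(t)‖ ≤ (M δ + 2) p < D p`, and a continuity argument shows that the bound `D p` can never
be reached on `[0, t_ε]`.
-/

open MeasureTheory Set Filter Topology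

theorem ContinuousOn.le_of_bootstrap {α β : Type*} [ConditionallyCompleteLinearOrder α]
    [TopologicalSpace α] [OrderTopology α] [LinearOrder β] [TopologicalSpace β]
    [OrderClosedTopology β] {f : α → β} {s T : α} {a b : β} (hf : ContinuousOn f (Icc s T))
    (hab : a < b) (h : ∀ t ∈ Icc s T, (∀ τ ∈ Ico s t, f τ ≤ b) → f t ≤ a) :
    ∀ t ∈ Icc s T, f t ≤ a := by
  have hlt : ∀ t ∈ Icc s T, f t < b := by
    by_contra! hex
    set B := Icc s T ∩ f ⁻¹' Ici b
    have hbdd : BddBelow B := ⟨s, fun x hx => hx.1.1⟩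
    have hmem : sInf B ∈ B :=
      (hf.preimage_isClosed_of_isClosed isClosed_Icc isClosed_Ici).csInf_mem hex hbdd
    have hbelow : ∀ τ ∈ Ico s (sInf B), f τ ≤ b := fun τ hτ =>
      le_of_lt <| not_le.1 fun hbτ =>
        (csInf_le hbdd ⟨⟨hτ.1, hτ.2.le.trans hmem.1.2⟩, hbτ⟩).not_gt hτ.2
    exact (le_trans hmem.2 (h _ hmem.1 hbelow)).not_gt hab
  exact fun t ht => h t ht fun τ hτ => (hlt τ ⟨hτ.1, hτ.2.le.trans ht.2⟩).le

theorem intervalIntegrable_sub_rpow_neg {α : ℝ} (hα : α < 1) (t : ℝ) :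
    IntervalIntegrable (fun τ : ℝ => (t - τ) ^ (-α)) volume 0 t := by
  simpa using ((intervalIntegral.intervalIntegrable_rpow' (r := -α) (a := 0) (b := t)
    (by linarith)).comp_sub_left t).symm

theorem integral_one_add_sub_rpow_neg {α : ℝ} (hα : α < 1) (t : ℝ) :
    ∫ τ in (0:ℝ)..t, (1 + (t - τ) ^ (-α)) = t + t ^ (1 - α) / (1 - α) := by
  rw [intervalIntegral.integral_add intervalIntegrable_const
      (intervalIntegrable_sub_rpow_neg hα t),
    intervalIntegral.integral_comp_sub_left (fun s : ℝ => s ^ (-α)) t,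
    integral_rpow (Or.inl (by linarith))]
  simp only [sub_self, sub_zero, intervalIntegral.integral_const, smul_eq_mul, mul_one]
  rw [Real.zero_rpow (by linarith), neg_add_eq_sub]
  ring

theorem norm_intervalIntegral_le_of_rpow_bound {E F : Type*} [NormedAddCommGroup E]
    [NormedSpace ℝ E] [NormedAddCommGroup F] [NormedSpace ℝ F] {S : ℝ → E →L[ℝ] F}
    {g : ℝ → E} {M α K t : ℝ} (hα : α < 1) (ht : 0 ≤ t)
    (hS : ∀ s, 0 < s → ‖S s‖ ≤ M * (1 + s ^ (-α)))
    (hg : ∀ τ ∈ Ioo 0 t, ‖g τ‖ ≤ K) :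
    ‖∫ τ in (0:ℝ)..t, S (t - τ) (g τ)‖ ≤ M * K * (t + t ^ (1 - α) / (1 - α)) := by
  rw [← integral_one_add_sub_rpow_neg hα, ← intervalIntegral.integral_const_mul]
  refine intervalIntegral.norm_integral_le_of_norm_le ht ?_
    ((intervalIntegrable_const.add (intervalIntegrable_sub_rpow_neg hα t)).const_mul _)
  filter_upwards [Measure.ae_ne volume t] with τ hτt hτ
  have hst : 0 < t - τ := sub_pos.2 (hτ.2.lt_of_ne hτt)
  calc ‖S (t - τ) (g τ)‖ ≤ M * (1 + (t - τ) ^ (-α)) * K :=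
        (S _).le_of_opNorm_le_of_le (hS _ hst) (hg τ ⟨hτ.1, hτ.2.lt_of_ne hτt⟩)
    _ = M * K * (1 + (t - τ) ^ (-α)) := by ring

theorem add_rpow_div_le {α t T : ℝ} (hα : α ∈ Ico 0 1) (ht : t ∈ Icc 0 T) :
    t + t ^ (1 - α) / (1 - α) ≤ (1 + 2 * T) / (1 - α) := by
  have h1α : 0 < 1 - α := by linarith [hα.2]
  have hpow : t ^ (1 - α) ≤ 1 + t := by
    have := rpow_one_add_le_one_add_mul_self (s := t - 1) (by linarith [ht.1])
      h1α.le (by linarith [hα.1])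
    rw [add_sub_cancel] at this
    nlinarith [ht.1, hα.1]
  rw [le_div_iff₀ h1α, add_mul, div_mul_cancel₀ _ h1α.ne']
  nlinarith [ht.1, ht.2, hα.1]

theorem norm_sq_smul_add_le {X Y : Type*} [NormedAddCommGroup X] [NormedSpace ℝ X]
    [NormedAddCommGroup Y] [NormedSpace ℝ Y] {A : X →L[ℝ] Y} {v : X} {w : Y} {C D p ε : ℝ}
    (hA : ‖A‖ ≤ C) (hw : ‖w‖ ≤ C * ‖v‖ ^ 3) (hε : ε ^ 2 ≤ p ^ 2)
    (hv : ‖v‖ ≤ D * p) :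
    ‖ε ^ 2 • A v + w‖ ≤ C * (D + D ^ 3) * p ^ 3 := by
  have hC : 0 ≤ C := (norm_nonneg A).trans hA
  calc ‖ε ^ 2 • A v + w‖ ≤ ε ^ 2 * (C * ‖v‖) + C * ‖v‖ ^ 3 := by
        refine (norm_add_le _ _).trans (add_le_add ?_ hw)
        rw [norm_smul, norm_pow, Real.norm_eq_abs, sq_abs]
        exact mul_le_mul_of_nonneg_left (A.le_of_opNorm_le hA v) (sq_nonneg ε)
    _ ≤ p ^ 2 * (C * (D * p)) + C * (D * p) ^ 3 := by gcongr
    _ = C * (D + D ^ 3) * p ^ 3 := by ring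

theorem norm_rpow_smul_le {E : Type*} [NormedAddCommGroup E] [NormedSpace ℝ E] {ε a b : ℝ}
    {w : E} (hε : 0 < ε) (hw : ‖w‖ ≤ ε ^ b) : ‖ε ^ a • w‖ ≤ ε ^ (a + b) := by
  rw [norm_smul, Real.norm_of_nonneg (by positivity), Real.rpow_add hε]
  exact mul_le_mul_of_nonneg_left hw (by positivity)

theorem tendsto_rpow_mul_one_add_mul_log {a : ℝ} (ha : 0 < a) (b : ℝ) :
    Tendsto (fun x : ℝ => x ^ a * (1 + b * Real.log x)) (𝓝[>] 0) (𝓝 0) := by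
  have hpow : Tendsto (fun x : ℝ => x ^ a) (𝓝[>] 0) (𝓝 0) := by
    simpa [Real.zero_rpow ha.ne'] using
      (Real.continuousAt_rpow_const 0 a (Or.inr ha.le)).tendsto.mono_left nhdsWithin_le_nhds
  have := hpow.add ((tendsto_log_mul_rpow_nhdsGT_zero ha).const_mul b)
  rw [mul_zero, add_zero] at this
  exact this.congr fun x => by ring

theorem eventually_mul_rpow_sq_mul_le_one {c κ b : ℝ} (hc : 0 ≤ c) (hκ : κ < 1) :
    ∀ᶠ ε in 𝓝[>] 0, ε ≤ 1 ∧
      ∀ T ≤ b * Real.log ε, c * (ε ^ (1 - κ)) ^ 2 * (1 + 2 * T) ≤ 1 := by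
  have hlim := (tendsto_rpow_mul_one_add_mul_log (a := (1 - κ) * (2 : ℕ)) (by simp; linarith)
    (2 * b)).const_mul c
  rw [mul_zero] at hlim
  filter_upwards [hlim.eventually_le_const one_pos, Ioc_mem_nhdsGT one_pos] with ε hsmall hε
  refine ⟨hε.2, fun T hT => le_trans ?_ hsmall⟩
  rw [Real.rpow_mul_natCast hε.1.le, mul_assoc]
  exact mul_le_mul_of_nonneg_left (mul_le_mul_of_nonneg_left (by linarith) (by positivity)) hc

/-- `Y` plays the role of `X^{−α}`, `S t` of `e^{tL}` on `X`, `Shat t` of its extension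
`X^{−α} → X`, and `WL` of the stochastic convolution `W_L`. -/
theorem stmt17_general {X Y : Type*} [NormedAddCommGroup X] [InnerProductSpace ℝ X]
    [NormedAddCommGroup Y] [NormedSpace ℝ Y]
    (α H κ M δ C Cl : ℝ)
    (hα : α ∈ Ico (0:ℝ) 1) (hκ : κ ∈ Ico (0:ℝ) 1)
    (hM : 1 ≤ M) (hδ : 0 < δ)
    (S : ℝ → X →L[ℝ] X) (Shat : ℝ → Y →L[ℝ] X) (A : X →L[ℝ] Y) (F : X → Y)
    (hS : ∀ t : ℝ, 0 ≤ t → ‖S t‖ ≤ M)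
    (hShat : ∀ t : ℝ, 0 < t → ‖Shat t‖ ≤ M * (1 + t ^ (-α)))
    (hA : ‖A‖ ≤ C) (hF : ∀ v : X, ‖F v‖ ≤ C * ‖v‖ ^ 3) :
    ∀ D : ℝ, M * δ + 2 < D → ∃ ε₀ > 0, ∀ ε : ℝ, 0 < ε → ε ≤ ε₀ →
      ∀ (tε : ℝ) (u : ℝ → X) (u₀ : X) (WL : ℝ → X),
        0 ≤ tε → tε ≤ Cl * Real.log (ε ^ (-(2 * H))) →
        ContinuousOn u (Icc 0 tε) →
        (∀ t ∈ Icc (0:ℝ) tε,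
          u t = S t u₀ +
            (∫ τ in (0:ℝ)..t, (Shat (t - τ)) (ε ^ 2 • A (u τ) + F (u τ))) +
            ε ^ (2 * H + 1) • WL t) →
        ‖u₀‖ ≤ δ * ε ^ (1 - κ) →
        (∀ t ∈ Icc (0:ℝ) tε, ‖WL t‖ ≤ ε ^ (-(2 * H) - κ)) →
        ∀ t ∈ Icc (0:ℝ) tε, ‖u t‖ ≤ D * ε ^ (1 - κ) := by
  intro D hD
  have hC0 : 0 ≤ C := (norm_nonneg A).trans hA
  have hD0 : 0 < D := by nlinarith
  have h1α : 0 < 1 - α := by linarith [hα.2]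
  obtain ⟨ε₀, hε₀, hsmall⟩ := mem_nhdsGT_iff_exists_Ioc_subset.1 <|
    eventually_mul_rpow_sq_mul_le_one (c := M * C * (D + D ^ 3) / (1 - α))
      (b := Cl * -(2 * H)) (by positivity) hκ.2
  refine ⟨ε₀, hε₀, fun ε hε hεle tε u u₀ WL _ htε hu hmild hu₀ hWL => ?_⟩
  obtain ⟨hε1, hdrift⟩ := hsmall ⟨hε, hεle⟩
  rw [Real.log_rpow hε, ← mul_assoc] at htε
  set p := ε ^ (1 - κ)
  have hp : 0 < p := by positivity
  have hεp : ε ^ 2 ≤ p ^ 2 := by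
    gcongr
    simpa using Real.rpow_le_rpow_of_exponent_ge hε hε1 (by linarith [hκ.1] : 1 - κ ≤ 1)
  have hab : (M * δ + 2) * p < D * p := by gcongr
  refine fun s hs => (hu.norm.le_of_bootstrap hab (fun t ht hbelow => ?_) s hs).trans hab.le
  have hconv := norm_intervalIntegral_le_of_rpow_bound hα.2 ht.1 hShat fun τ hτ =>
    norm_sq_smul_add_le hA (hF _) hεp (hbelow τ (Ioo_subset_Ico_self hτ))
  have hconv_small : M * (C * (D + D ^ 3) * p ^ 3) * (t + t ^ (1 - α) / (1 - α)) ≤ p :=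
    calc _ ≤ M * (C * (D + D ^ 3) * p ^ 3) * ((1 + 2 * tε) / (1 - α)) := by
          gcongr; exact add_rpow_div_le hα ht
      _ = (M * C * (D + D ^ 3) / (1 - α) * p ^ 2 * (1 + 2 * tε)) * p := by
          field_simp
      _ ≤ p := mul_le_of_le_one_left hp.le (hdrift tε htε)
  have hnoise : ‖ε ^ (2 * H + 1) • WL t‖ ≤ p :=
    (norm_rpow_smul_le hε (hWL t ht)).trans_eq <| by
      rw [show 2 * H + 1 + (-(2 * H) - κ) = 1 - κ by ring]
  have hinit : ‖S t u₀‖ ≤ M * (δ * p) := (S t).le_of_opNorm_le_of_le (hS t ht.1) hu₀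
  rw [hmild t ht]
  calc _ ≤ ‖S t u₀‖ + ‖∫ τ in (0:ℝ)..t, Shat (t - τ) (ε ^ 2 • A (u τ) + F (u τ))‖
          + ‖ε ^ (2 * H + 1) • WL t‖ := norm_add₃_le
    _ ≤ (M * δ + 2) * p := by linarith

/-- **attractivity a priori bound.** Under the semigroup estimates
`‖e^{tL}‖ ≤ M` and `‖e^{tL}‖_{L(X^{−α},X)} ≤ M(1+t^{−α})` (the space `Y` plays the role of
`X^{−α}`, `S` of the semigroup on `X` and `Ŝ` of its extension `X^{−α} → X`), suppose `u`
is a mild solution of `du = (Lu + ε²Au + 𝓕(u)) dt + ε^{2H+1} dW` with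
`‖A‖_{L(X,X^{−α})} ≤ C`, `‖𝓕(u)‖_{X^{−α}} ≤ C‖u‖³`, `‖u₀‖ ≤ δ ε^{1−κ}`, and
`sup_{t ∈ [0,t_ε]} ‖W_L(t)‖ ≤ ε^{−2H−κ}` where `t_ε = O(ln(ε^{−2H}))` and `κ ∈ [0,1)`.
Then for every `D > Mδ + 2` and `ε` sufficiently small,
`sup_{t ∈ [0,t_ε]} ‖u(t)‖ ≤ D ε^{1−κ}`. -/
theorem stmt17 {X Y : Type*} [NormedAddCommGroup X] [InnerProductSpace ℝ X] [CompleteSpace X]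
    [NormedAddCommGroup Y] [NormedSpace ℝ Y]
    (α H κ M δ C Cl : ℝ)
    (hα : α ∈ Ico (0:ℝ) 1) (hH : H ∈ Set.Ioo (0:ℝ) 1) (hκ : κ ∈ Ico (0:ℝ) 1)
    (hM : 1 ≤ M) (hδ : 0 < δ) (hC : 0 < C) (hCl : 0 < Cl)
    (S : ℝ → X →L[ℝ] X) (Shat : ℝ → Y →L[ℝ] X) (A : X →L[ℝ] Y) (F : X → Y)
    (hS : ∀ t : ℝ, 0 ≤ t → ‖S t‖ ≤ M)
    (hShat : ∀ t : ℝ, 0 < t → ‖Shat t‖ ≤ M * (1 + t ^ (-α)))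
    (hA : ‖A‖ ≤ C) (hF : ∀ v : X, ‖F v‖ ≤ C * ‖v‖ ^ 3) :
    ∀ D : ℝ, M * δ + 2 < D → ∃ ε₀ > 0, ∀ ε : ℝ, 0 < ε → ε ≤ ε₀ →
      ∀ (tε : ℝ) (u : ℝ → X) (u₀ : X) (WL : ℝ → X),
        0 ≤ tε → tε ≤ Cl * Real.log (ε ^ (-(2 * H))) →
        ContinuousOn u (Icc 0 tε) →
        (∀ t ∈ Icc (0:ℝ) tε,
          u t = S t u₀ +
            (∫ τ in (0:ℝ)..t, (Shat (t - τ)) (ε ^ 2 • A (u τ) + F (u τ))) +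
            ε ^ (2 * H + 1) • WL t) →
        ‖u₀‖ ≤ δ * ε ^ (1 - κ) →
        (∀ t ∈ Icc (0:ℝ) tε, ‖WL t‖ ≤ ε ^ (-(2 * H) - κ)) →
        ∀ t ∈ Icc (0:ℝ) tε, ‖u t‖ ≤ D * ε ^ (1 - κ) :=
  stmt17_general α H κ M δ C Cl hα hκ hM hδ S Shat A F hS hShat hA hF
end
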